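/- arXiv:2211.16071 — 2 statements merged into one kernel-verified Lean document; each statement's English description precedes it below -/
import Mathlib

section
/- Let ℋ be a real separable Hilbert space and λ, T > 0. Let (τ_i)_{i≥1} be a strictly increasing sequence of positive random variables with N(t) = #{i ≥ 1 : τ_i ≤ t} finite almost surely for every t, and suppose N(T) has the Poisson distribution with parameter λT. Let ((X_i, X_iⁿ))_{i≥1} be an i.i.d. sequence of ℋ×ℋ-valued random variables, independent of N(T), with E[‖X₁‖²] < ∞ and E[‖X₁ⁿ‖²] < ∞. Define the compound Poisson processes L(t) = ∑_{i : τ_i ≤ t} X_i and Lⁿ(t) = ∑_{i : τ_i ≤ t} X_iⁿ. Then E[ sup_{0 ≤ t ≤ T} ‖L(t) − Lⁿ(t)‖² ] ≤ 2λT(1 + λT) E[‖X₁ − X₁ⁿ‖²]. -/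
/-
Because `N(t) ≤ N(T)` for `t ≤ T`, Cauchy–Schwarz bounds the supremum pathwise by
`N(T) · ∑_{i < N(T)} ‖X_i - X_iⁿ‖²`. Conditioning on `N(T) = k`, which is independent of
the jumps, the expectation of this bound is `∑_k P(N(T) = k) · k² · E‖X₁ - X₁ⁿ‖²`, i.e.
`E[N(T)²] · E‖X₁ - X₁ⁿ‖²`, and the second moment of a Poisson variable with parameter `λT`
is `λT + (λT)² ≤ 2λT(1 + λT)`.
-/

open MeasureTheory ProbabilityTheory Finset
open scoped ENNReal Nat

theorem Real.hasSum_pow_div_factorial (y : ℝ) :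
    HasSum (fun n : ℕ => y ^ n / n !) (Real.exp y) :=
  Real.exp_eq_exp_ℝ ▸ NormedSpace.expSeries_div_hasSum_exp y

theorem hasSum_natCast_mul_pow_div_factorial (y : ℝ) :
    HasSum (fun n : ℕ => n * y ^ n / n !) (y * Real.exp y) := by
  rw [← hasSum_nat_add_iff' 1]
  simp only [sum_range_one, Nat.cast_zero, zero_mul, zero_div, sub_zero]
  refine ((Real.hasSum_pow_div_factorial y).mul_left y).congr_fun fun n => ?_
  push_cast [Nat.factorial_succ]
  field_simp
  ring

theorem hasSum_natCast_sq_mul_pow_div_factorial (y : ℝ) :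
    HasSum (fun n : ℕ => n ^ 2 * y ^ n / n !) ((y + y ^ 2) * Real.exp y) := by
  rw [← hasSum_nat_add_iff' 1]
  simp only [sum_range_one, Nat.cast_zero, zero_pow two_ne_zero, zero_mul, zero_div, sub_zero]
  rw [show (y + y ^ 2) * Real.exp y = y * (y * Real.exp y + Real.exp y) by ring]
  refine ((hasSum_natCast_mul_pow_div_factorial y).add
    (Real.hasSum_pow_div_factorial y)).mul_left y |>.congr_fun fun n => ?_
  push_cast [Nat.factorial_succ]
  field_simp
  ring

theorem measurable_ncard_setOf {Ω ι : Type*} [MeasurableSpace Ω] [Countable ι]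
    {p : ι → Ω → Prop} (hp : ∀ i, MeasurableSet {ω | p i ω}) :
    Measurable fun ω => {i | p i ω}.ncard := by
  have hfinset (s : Finset ι) : MeasurableSet {ω | {i | p i ω} = s} := by
    have : {ω | {i | p i ω} = s} = ⋂ i, {ω | p i ω ↔ i ∈ s} := by
      ext ω; simp [Set.ext_iff]
    rw [this]
    refine .iInter fun i => ?_
    by_cases hi : i ∈ s
    · simpa [hi] using hp i
    · simpa [hi] using (hp i).compl.mem
  have hfinite : MeasurableSet {ω | {i | p i ω}.Finite} := by
    have : {ω | {i | p i ω}.Finite} = ⋃ s : Finset ι, {ω | {i | p i ω} = s} := by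
      ext ω
      simp only [Set.mem_ofPred_eq, Set.mem_iUnion]
      exact ⟨fun h => h.exists_finset_coe.imp fun _ => Eq.symm,
        fun ⟨s, hs⟩ => hs ▸ s.finite_toSet⟩
    exact this ▸ .iUnion hfinset
  refine measurable_to_countable' fun k => ?_
  -- `ncard` of an infinite set is `0`
  have : (fun ω => {i | p i ω}.ncard) ⁻¹' {k} =
      (⋃ (s : Finset ι) (_ : s.card = k), {ω | {i | p i ω} = s}) ∪
        ({ω | {i | p i ω}.Finite}ᶜ ∩ {_ω | k = 0}) := by
    ext ω
    by_cases hfin : {i | p i ω}.Finite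
    · obtain ⟨s, hs⟩ := hfin.exists_finset_coe
      simp [← hs]
    · have (s : Finset ι) : ↑s ≠ {i | p i ω} := fun h => hfin (h ▸ s.finite_toSet)
      simp [hfin, this, Set.Infinite.ncard hfin, eq_comm]
  rw [this]
  exact (MeasurableSet.iUnion fun s => .iUnion fun _ => hfinset s).union
    (hfinite.compl.inter (MeasurableSet.const _))

theorem iSup_norm_sum_range_sq_le {ι E : Type*} [SeminormedAddCommGroup E] {N : ι → ℕ}
    {n : ℕ} (hN : ∀ t, N t ≤ n) (y : ℕ → E) :
    ⨆ t, ‖∑ i ∈ range (N t), y i‖ ^ 2 ≤ n * ∑ i ∈ range n, ‖y i‖ ^ 2 := by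
  refine Real.iSup_le (fun t => ?_) (by positivity)
  calc ‖∑ i ∈ range (N t), y i‖ ^ 2
      ≤ (∑ i ∈ range n, ‖y i‖) ^ 2 := by
        gcongr
        exact (norm_sum_le _ _).trans <| sum_le_sum_of_subset_of_nonneg
          (range_subset_range.2 (hN t)) fun i _ _ => norm_nonneg _
    _ ≤ n * ∑ i ∈ range n, ‖y i‖ ^ 2 := by
        simpa using sq_sum_le_card_mul_sum_sq (s := range n) (f := fun i => ‖y i‖)

section Moments

variable {Ω : Type*} {m mΩ : MeasurableSpace Ω} {μ : Measure Ω}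

theorem lintegral_comp_eq_tsum {N : Ω → ℕ} (hN : Measurable N) (g : ℕ → ℝ≥0∞) :
    ∫⁻ ω, g (N ω) ∂μ = ∑' k, μ {ω | N ω = k} * g k := by
  rw [← lintegral_map (measurable_of_countable g) hN, lintegral_countable']
  refine tsum_congr fun k => ?_
  rw [Measure.map_apply hN (measurableSet_singleton k), mul_comm]
  rfl

theorem lintegral_sq_of_poisson {N : Ω → ℕ} (hN : Measurable N) {y : ℝ} (hy : 0 ≤ y)
    (hpois : ∀ k : ℕ, μ {ω | N ω = k} = ENNReal.ofReal (Real.exp (-y) * y ^ k / k !)) :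
    ∫⁻ ω, (N ω : ℝ≥0∞) ^ 2 ∂μ = ENNReal.ofReal (y + y ^ 2) := by
  have hmoment : HasSum (fun k : ℕ => Real.exp (-y) * y ^ k / k ! * k ^ 2) (y + y ^ 2) := by
    have hexp : Real.exp (-y) * ((y + y ^ 2) * Real.exp y) = y + y ^ 2 := by
      rw [mul_left_comm, ← Real.exp_add, neg_add_cancel, Real.exp_zero, mul_one]
    rw [← hexp]
    exact ((hasSum_natCast_sq_mul_pow_div_factorial y).mul_left _).congr_fun fun k => by ring
  rw [lintegral_comp_eq_tsum hN fun k => (k : ℝ≥0∞) ^ 2, ← hmoment.tsum_eq,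
    ENNReal.ofReal_tsum_of_nonneg (fun k => by positivity) hmoment.summable]
  refine tsum_congr fun k => ?_
  rw [hpois, ENNReal.ofReal_mul (by positivity), ENNReal.ofReal_pow (Nat.cast_nonneg k),
    ENNReal.ofReal_natCast]

theorem lintegral_comp_of_indep (hm : m ≤ mΩ) {N : Ω → ℕ} (hN : Measurable N)
    {F : ℕ → Ω → ℝ≥0∞} (hF : ∀ k, Measurable[m] (F k))
    (hind : Indep (MeasurableSpace.comap N inferInstance) m μ) :
    ∫⁻ ω, F (N ω) ω ∂μ = ∑' k, μ {ω | N ω = k} * ∫⁻ ω, F k ω ∂μ := by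
  have hNm : MeasurableSpace.comap N inferInstance ≤ mΩ := measurable_iff_comap_le.1 hN
  have hdecomp (ω : Ω) : F (N ω) ω = ∑' k, {ω | N ω = k}.indicator 1 ω * F k ω := by
    rw [tsum_eq_single (N ω) fun k hk => by simp [Ne.symm hk]]
    simp
  have hlevel (k : ℕ) : Measurable[MeasurableSpace.comap N inferInstance]
      ({ω | N ω = k}.indicator (1 : Ω → ℝ≥0∞)) :=
    measurable_const.indicator (MeasurableSpace.measurableSet_comap.2 ⟨{k}, by simp, rfl⟩)
  have hterm (k : ℕ) : Measurable fun ω => {ω | N ω = k}.indicator 1 ω * F k ω :=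
    ((hlevel k).mono hNm le_rfl).mul ((hF k).mono hm le_rfl)
  simp_rw [hdecomp]
  rw [lintegral_tsum fun k => (hterm k).aemeasurable]
  refine tsum_congr fun k => ?_
  rw [lintegral_mul_eq_lintegral_mul_lintegral_of_independent_measurableSpace hNm hm hind
    (hlevel k) (hF k), lintegral_indicator_one (measurableSet_eq_fun hN measurable_const)]

theorem lintegral_natCast_mul_sum_range_of_indep (hm : m ≤ mΩ) {N : Ω → ℕ}
    (hN : Measurable N) {f : ℕ → Ω → ℝ≥0∞} (hf : ∀ i, Measurable[m] (f i))
    (hind : Indep (MeasurableSpace.comap N inferInstance) m μ)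
    {c : ℝ≥0∞} (hc : ∀ i, ∫⁻ ω, f i ω ∂μ = c) :
    ∫⁻ ω, N ω * ∑ i ∈ range (N ω), f i ω ∂μ = (∫⁻ ω, (N ω : ℝ≥0∞) ^ 2 ∂μ) * c := by
  rw [lintegral_comp_of_indep hm hN (F := fun k ω => k * ∑ i ∈ range k, f i ω)
    (fun k => measurable_const.mul (Finset.measurable_sum _ fun i _ => hf i)) hind,
    lintegral_comp_eq_tsum hN fun k => (k : ℝ≥0∞) ^ 2, ← ENNReal.tsum_mul_right]
  refine tsum_congr fun k => ?_
  rw [lintegral_const_mul _ (Finset.measurable_sum _ fun i _ => (hf i).mono hm le_rfl),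
    lintegral_finsetSum _ fun i _ => (hf i).mono hm le_rfl]
  simp only [hc, sum_const, card_range, nsmul_eq_mul]
  ring

theorem integral_natCast_mul_sum_range_sq_norm_of_poisson {E : Type*}
    [NormedAddCommGroup E] [MeasurableSpace E] [OpensMeasurableSpace E] (hm : m ≤ mΩ)
    {N : Ω → ℕ} (hN : Measurable N) {y : ℝ} (hy : 0 ≤ y)
    (hpois : ∀ k : ℕ, μ {ω | N ω = k} = ENNReal.ofReal (Real.exp (-y) * y ^ k / k !))
    {Y : ℕ → Ω → E} (hY : ∀ i, Measurable[m] (Y i))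
    (hind : Indep (MeasurableSpace.comap N inferInstance) m μ)
    (hident : ∀ i, IdentDistrib (Y i) (Y 0) μ μ) (hY0 : MemLp (Y 0) 2 μ) :
    Integrable (fun ω => (N ω : ℝ) * ∑ i ∈ range (N ω), ‖Y i ω‖ ^ 2) μ ∧
      ∫ ω, (N ω : ℝ) * ∑ i ∈ range (N ω), ‖Y i ω‖ ^ 2 ∂μ
        = (y + y ^ 2) * ∫ ω, ‖Y 0 ω‖ ^ 2 ∂μ := by
  set f : ℕ → Ω → ℝ≥0∞ := fun i ω => ENNReal.ofReal (‖Y i ω‖ ^ 2)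
  have hφ : Measurable fun x : E => ENNReal.ofReal (‖x‖ ^ 2) := by fun_prop
  have hf (i : ℕ) : Measurable[m] (f i) := hφ.comp (hY i)
  have hf' (i : ℕ) : Measurable (f i) := (hf i).mono hm le_rfl
  have hG := lintegral_natCast_mul_sum_range_of_indep hm hN hf hind
    fun i => ((hident i).comp hφ).lintegral_eq
  rw [lintegral_sq_of_poisson hN hy hpois] at hG
  have hY0sq := (memLp_two_iff_integrable_sq_norm hY0.1).1 hY0
  set G : Ω → ℝ≥0∞ := fun ω => N ω * ∑ i ∈ range (N ω), f i ω
  have hGmeas : Measurable G :=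
    (measurable_from_prod_countable_left (f := fun p : Ω × ℕ => (p.2 : ℝ≥0∞) *
      ∑ i ∈ range p.2, f i p.1) fun k => by dsimp only; fun_prop).comp
      (measurable_id.prodMk hN)
  have hGfin : ∫⁻ ω, G ω ∂μ ≠ ∞ :=
    hG ▸ ENNReal.mul_ne_top ENNReal.ofReal_ne_top hY0sq.lintegral_lt_top.ne
  have htoReal :
      (fun ω => (N ω : ℝ) * ∑ i ∈ range (N ω), ‖Y i ω‖ ^ 2) = fun ω => (G ω).toReal := by
    funext ω
    simp only [G, f, ENNReal.toReal_mul, ENNReal.toReal_natCast,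
      ENNReal.toReal_sum fun i _ => ENNReal.ofReal_ne_top, ENNReal.toReal_ofReal (sq_nonneg _)]
  rw [htoReal, integral_toReal hGmeas.aemeasurable (ae_lt_top hGmeas hGfin), hG,
    ENNReal.toReal_mul, ENNReal.toReal_ofReal (by positivity),
    integral_eq_lintegral_of_nonneg_ae (ae_of_all _ fun _ => sq_nonneg _)
      hY0sq.aestronglyMeasurable]
  exact ⟨integrable_toReal_of_lintegral_ne_top hGmeas.aemeasurable hGfin, rfl⟩

end Moments

theorem stmt5_general {E : Type*} [NormedAddCommGroup E]
    [SecondCountableTopology E] [MeasurableSpace E] [BorelSpace E]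
    {Ω : Type*} [MeasurableSpace Ω] (μ : Measure Ω)
    (lam T : ℝ) (hlam : 0 < lam) (hT : 0 < T)
    (τ : ℕ → Ω → ℝ) (hτmeas : ∀ i, Measurable (τ i))
    (hfin : ∀ t : ℝ, ∀ᵐ ω ∂μ, {i : ℕ | τ i ω ≤ t}.Finite)
    (Nf : ℝ → Ω → ℕ) (hNf : ∀ t ω, Nf t ω = Set.ncard {i : ℕ | τ i ω ≤ t})
    (hpois : ∀ k : ℕ, μ {ω | Nf T ω = k}
        = ENNReal.ofReal (Real.exp (-(lam * T)) * (lam * T) ^ k / k.factorial))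
    (X Xn : ℕ → Ω → E)
    (hXmeas : ∀ i, Measurable (X i)) (hXnmeas : ∀ i, Measurable (Xn i))
    (hident : ∀ i, IdentDistrib (fun ω => (X i ω, Xn i ω)) (fun ω => (X 0 ω, Xn 0 ω)) μ μ)
    (hNindep : Indep (MeasurableSpace.comap (Nf T) inferInstance)
      (⨆ i, MeasurableSpace.comap (fun ω => (X i ω, Xn i ω)) inferInstance) μ)
    (hX2 : Integrable (fun ω => ‖X 0 ω‖ ^ 2) μ)
    (hXn2 : Integrable (fun ω => ‖Xn 0 ω‖ ^ 2) μ)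
    (L Ln : ℝ → Ω → E)
    (hL : ∀ t ω, L t ω = ∑ i ∈ Finset.range (Nf t ω), X i ω)
    (hLn : ∀ t ω, Ln t ω = ∑ i ∈ Finset.range (Nf t ω), Xn i ω) :
    (∫ ω, (⨆ t : Set.Icc (0:ℝ) T, ‖L t.1 ω - Ln t.1 ω‖ ^ 2) ∂μ)
      ≤ 2 * lam * T * (1 + lam * T) * ∫ ω, ‖X 0 ω - Xn 0 ω‖ ^ 2 ∂μ := by
  have hN : Measurable (Nf T) := by
    simpa only [← hNf] using
      measurable_ncard_setOf fun i => measurableSet_le (hτmeas i) (measurable_const (a := T))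
  have hsub : Measurable fun p : E × E => p.1 - p.2 := measurable_fst.sub measurable_snd
  have hY (i : ℕ) :
      Measurable[⨆ i, MeasurableSpace.comap (fun ω => (X i ω, Xn i ω)) inferInstance]
        fun ω => X i ω - Xn i ω :=
    hsub.comp <| (comap_measurable _).mono (le_iSup (fun i => MeasurableSpace.comap
      (fun ω => (X i ω, Xn i ω)) inferInstance) i) le_rfl
  have hY0 : MemLp (fun ω => X 0 ω - Xn 0 ω) 2 μ :=
    ((memLp_two_iff_integrable_sq_norm (hXmeas 0).aestronglyMeasurable).2 hX2).sub
      ((memLp_two_iff_integrable_sq_norm (hXnmeas 0).aestronglyMeasurable).2 hXn2)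
  obtain ⟨hint, hmoment⟩ := integral_natCast_mul_sum_range_sq_norm_of_poisson
    (iSup_le fun i => ((hXmeas i).prodMk (hXnmeas i)).comap_le) hN (by positivity) hpois hY
    hNindep (fun i => (hident i).comp hsub) hY0
  have hpath : ∀ᵐ ω ∂μ, (⨆ t : Set.Icc (0:ℝ) T, ‖L t.1 ω - Ln t.1 ω‖ ^ 2)
      ≤ Nf T ω * ∑ i ∈ range (Nf T ω), ‖X i ω - Xn i ω‖ ^ 2 := by
    filter_upwards [hfin T] with ω hω
    simp only [hL, hLn, ← sum_sub_distrib]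
    refine iSup_norm_sum_range_sq_le (fun t => ?_) _
    rw [hNf, hNf]
    exact Set.ncard_le_ncard (fun i hi => le_trans hi t.2.2) hω
  calc (∫ ω, (⨆ t : Set.Icc (0:ℝ) T, ‖L t.1 ω - Ln t.1 ω‖ ^ 2) ∂μ)
      ≤ (lam * T + (lam * T) ^ 2) * ∫ ω, ‖X 0 ω - Xn 0 ω‖ ^ 2 ∂μ :=
        hmoment ▸ integral_mono_of_nonneg
          (ae_of_all _ fun ω => Real.iSup_nonneg fun _ => sq_nonneg _) hint hpath
    _ ≤ 2 * lam * T * (1 + lam * T) * ∫ ω, ‖X 0 ω - Xn 0 ω‖ ^ 2 ∂μ :=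
        mul_le_mul_of_nonneg_right (by nlinarith [mul_pos hlam hT])
          (integral_nonneg fun _ => sq_nonneg _)

/-- For compound Poisson processes `L(t) = ∑_{τ_i ≤ t} X_i` and
`Lⁿ(t) = ∑_{τ_i ≤ t} X_iⁿ` with common jump times (`N(T)` Poisson with parameter `λT`,
i.i.d. square-integrable pairs of jumps independent of `N(T)`),
`E[sup_{0≤t≤T} ‖L(t) − Lⁿ(t)‖²] ≤ 2λT(1+λT) E[‖X₁ − X₁ⁿ‖²]`. -/
theorem stmt5 {E : Type*} [NormedAddCommGroup E] [InnerProductSpace ℝ E] [CompleteSpace E]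
    [SecondCountableTopology E] [MeasurableSpace E] [BorelSpace E]
    {Ω : Type*} [MeasurableSpace Ω] (μ : Measure Ω) [IsProbabilityMeasure μ]
    (lam T : ℝ) (hlam : 0 < lam) (hT : 0 < T)
    (τ : ℕ → Ω → ℝ) (hτpos : ∀ i ω, 0 < τ i ω)
    (hτmono : ∀ ω, StrictMono fun i => τ i ω) (hτmeas : ∀ i, Measurable (τ i))
    (hfin : ∀ t : ℝ, ∀ᵐ ω ∂μ, {i : ℕ | τ i ω ≤ t}.Finite)
    (Nf : ℝ → Ω → ℕ) (hNf : ∀ t ω, Nf t ω = Set.ncard {i : ℕ | τ i ω ≤ t})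
    (hpois : ∀ k : ℕ, μ {ω | Nf T ω = k}
        = ENNReal.ofReal (Real.exp (-(lam * T)) * (lam * T) ^ k / k.factorial))
    (X Xn : ℕ → Ω → E)
    (hXmeas : ∀ i, Measurable (X i)) (hXnmeas : ∀ i, Measurable (Xn i))
    (hident : ∀ i, IdentDistrib (fun ω => (X i ω, Xn i ω)) (fun ω => (X 0 ω, Xn 0 ω)) μ μ)
    (hindep : iIndepFun (fun i ω => (X i ω, Xn i ω)) μ)
    (hNindep : Indep (MeasurableSpace.comap (Nf T) inferInstance)
      (⨆ i, MeasurableSpace.comap (fun ω => (X i ω, Xn i ω)) inferInstance) μ)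
    (hX2 : Integrable (fun ω => ‖X 0 ω‖ ^ 2) μ)
    (hXn2 : Integrable (fun ω => ‖Xn 0 ω‖ ^ 2) μ)
    (L Ln : ℝ → Ω → E)
    (hL : ∀ t ω, L t ω = ∑ i ∈ Finset.range (Nf t ω), X i ω)
    (hLn : ∀ t ω, Ln t ω = ∑ i ∈ Finset.range (Nf t ω), Xn i ω) :
    (∫ ω, (⨆ t : Set.Icc (0:ℝ) T, ‖L t.1 ω - Ln t.1 ω‖ ^ 2) ∂μ)
      ≤ 2 * lam * T * (1 + lam * T) * ∫ ω, ‖X 0 ω - Xn 0 ω‖ ^ 2 ∂μ :=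
  stmt5_general μ lam T hlam hT τ hτmeas hfin Nf hNf hpois X Xn hXmeas hXnmeas hident hNindep hX2
    hXn2 L Ln hL hLn
end

section
/- Let ℋ be a real separable Hilbert space, let 𝔠 and 𝔠ⁿ be bounded linear operators on ℋ, and let λ, T > 0. Let (τ_i)_{i≥1} be a strictly increasing sequence of positive random variables with N(t) = #{i ≥ 1 : τ_i ≤ t} finite almost surely for every t, and suppose N(T) has the Poisson distribution with parameter λT. Let (X_i)_{i≥1} be an i.i.d. sequence of ℋ-valued random variables, independent of N(T), with E[‖X₁‖²] < ∞, and let V₀ be an ℋ-valued random variable with E[‖V₀‖²] < ∞. Define V(t) = exp(t𝔠)V₀ + ∑_{i : τ_i ≤ t} exp((t − τ_i)𝔠) X_i and Vⁿ(t) = exp(t𝔠ⁿ)V₀ + ∑_{i : τ_i ≤ t} exp((t − τ_i)𝔠ⁿ) X_i. Then E[ sup_{0 ≤ t ≤ T} ‖V(t) − Vⁿ(t)‖² ] ≤ C(T) ‖𝔠 − 𝔠ⁿ‖_op², where C(T) = 2T² e^{2T·max(‖𝔠‖_op, ‖𝔠ⁿ‖_op)} ( E[‖V₀‖²] + λT E[‖X₁‖²]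 + λ²T² (E[‖X₁‖])² ). -/
open MeasureTheory ProbabilityTheory Finset
open scoped Nat ENNReal

/-!
Both processes are driven by the same jumps, so `V(t) - Vⁿ(t)` is `(e^{t𝔠} - e^{t𝔠ⁿ}) V₀` plus
the sum of `(e^{(t-τᵢ)𝔠} - e^{(t-τᵢ)𝔠ⁿ}) Xᵢ` over `τᵢ ≤ t`. Comparing exponential series term by
term gives `‖e^a - e^b‖ ≤ ‖a - b‖ e^M` for `‖a‖, ‖b‖ ≤ M`, hence, uniformly in `t ∈ [0, T]`,
`‖V(t) - Vⁿ(t)‖ ≤ K (‖V₀‖ + S)` with `K = T e^{T max(‖𝔠‖, ‖𝔠ⁿ‖)} ‖𝔠 - 𝔠ⁿ‖` and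
`S = ∑_{i < N(T)} ‖Xᵢ‖`. So the supremum is at most `2K² (‖V₀‖² + S²)`. Conditioning on the
independent count `N(T) = k` gives `E[S²] = E[N] E‖X₁‖² + E[N(N-1)] (E‖X₁‖)²`, and the factorial
moments `E[N(N-1)⋯(N-j+1)]` of a Poisson variable with parameter `θ = λT` are `θ^j`.
-/

theorem norm_pow_succ_sub_pow_succ_le {A : Type*} [NormedRing A] {a b : A} {M : ℝ}
    (ha : ‖a‖ ≤ M) (hb : ‖b‖ ≤ M) (n : ℕ) :
    ‖a ^ (n + 1) - b ^ (n + 1)‖ ≤ (n + 1) * M ^ n * ‖a - b‖ := by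
  have hM : 0 ≤ M := (norm_nonneg a).trans ha
  induction n with
  | zero => simp
  | succ n ih =>
    have hsplit : a ^ (n + 2) - b ^ (n + 2)
        = a * (a ^ (n + 1) - b ^ (n + 1)) + (a - b) * b ^ (n + 1) := by
      rw [pow_succ' a, pow_succ' b, mul_sub, sub_mul]; abel
    have hbpow : ‖b ^ (n + 1)‖ ≤ M ^ (n + 1) :=
      (norm_pow_le' b n.succ_pos).trans (pow_le_pow_left₀ (norm_nonneg b) hb _)
    calc ‖a ^ (n + 2) - b ^ (n + 2)‖
        ≤ ‖a‖ * ‖a ^ (n + 1) - b ^ (n + 1)‖ + ‖a - b‖ * ‖b ^ (n + 1)‖ := by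
          rw [hsplit]
          exact (norm_add_le _ _).trans (add_le_add (norm_mul_le _ _) (norm_mul_le _ _))
      _ ≤ M * ((n + 1) * M ^ n * ‖a - b‖) + ‖a - b‖ * M ^ (n + 1) := by gcongr
      _ = (↑(n + 1) + 1) * M ^ (n + 1) * ‖a - b‖ := by push_cast; ring

theorem norm_exp_sub_exp_le {A : Type*} [NormedRing A] [NormedAlgebra ℝ A] [CompleteSpace A]
    {a b : A} {M : ℝ} (ha : ‖a‖ ≤ M) (hb : ‖b‖ ≤ M) :
    ‖NormedSpace.exp a - NormedSpace.exp b‖ ≤ ‖a - b‖ * Real.exp M := by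
  set d : ℕ → A := fun n => ((n !⁻¹ : ℝ) • a ^ n - (n !⁻¹ : ℝ) • b ^ n)
  have hd : HasSum d (NormedSpace.exp a - NormedSpace.exp b) :=
    (NormedSpace.exp_series_hasSum_exp' (𝕂 := ℝ) a).sub (NormedSpace.exp_series_hasSum_exp' b)
  have hd' : HasSum (fun n => d (n + 1)) (NormedSpace.exp a - NormedSpace.exp b) := by
    simpa [d] using (hasSum_nat_add_iff' 1).2 hd
  have hbound : ∀ n, ‖d (n + 1)‖ ≤ ‖a - b‖ * (M ^ n / n !) := fun n => by
    simp only [d]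
    rw [← smul_sub, norm_smul, Real.norm_eq_abs, abs_of_nonneg (by positivity)]
    calc ((n + 1)! : ℝ)⁻¹ * ‖a ^ (n + 1) - b ^ (n + 1)‖
        ≤ ((n + 1)! : ℝ)⁻¹ * ((n + 1) * M ^ n * ‖a - b‖) := by
          gcongr; exact norm_pow_succ_sub_pow_succ_le ha hb n
      _ = ‖a - b‖ * (M ^ n / n !) := by
          rw [Nat.factorial_succ]; push_cast; field_simp
  have hexp : HasSum (fun n : ℕ => ‖a - b‖ * (M ^ n / n !)) (‖a - b‖ * Real.exp M) := by
    rw [Real.exp_eq_exp_ℝ]; exact (NormedSpace.expSeries_div_hasSum_exp M).mul_left _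
  rw [← hd'.tsum_eq]
  exact tsum_of_norm_bounded hexp hbound

theorem norm_exp_smul_apply_sub_exp_smul_apply_le {E : Type*} [NormedAddCommGroup E]
    [NormedSpace ℝ E] [CompleteSpace E] (c cn : E →L[ℝ] E) {s T : ℝ} (hs : 0 ≤ s) (hsT : s ≤ T)
    (x : E) :
    ‖NormedSpace.exp (s • c) x - NormedSpace.exp (s • cn) x‖
      ≤ T * Real.exp (T * max ‖c‖ ‖cn‖) * ‖c - cn‖ * ‖x‖ := by
  have hnorm : ∀ d : E →L[ℝ] E, ‖s • d‖ = s * ‖d‖ := fun d => by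
    rw [norm_smul, Real.norm_of_nonneg hs]
  have hle : ∀ d : E →L[ℝ] E, ‖d‖ ≤ max ‖c‖ ‖cn‖ → ‖s • d‖ ≤ T * max ‖c‖ ‖cn‖ := fun d hd => by
    rw [hnorm]; exact mul_le_mul hsT hd (norm_nonneg d) (hs.trans hsT)
  rw [← sub_apply]
  refine (ContinuousLinearMap.le_opNorm _ x).trans (mul_le_mul_of_nonneg_right ?_ (norm_nonneg x))
  calc ‖NormedSpace.exp (s • c) - NormedSpace.exp (s • cn)‖
      ≤ ‖s • c - s • cn‖ * Real.exp (T * max ‖c‖ ‖cn‖) :=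
        norm_exp_sub_exp_le (hle c (le_max_left _ _)) (hle cn (le_max_right _ _))
    _ ≤ T * ‖c - cn‖ * Real.exp (T * max ‖c‖ ‖cn‖) := by
        rw [← smul_sub, hnorm]; gcongr
    _ = T * Real.exp (T * max ‖c‖ ‖cn‖) * ‖c - cn‖ := by ring

theorem norm_jump_sum_sub_jump_sum_le {E : Type*} [NormedAddCommGroup E] [NormedSpace ℝ E]
    [CompleteSpace E] (c cn : E →L[ℝ] E) {t T : ℝ} (ht : 0 ≤ t) (htT : t ≤ T) (x₀ : E)
    (x : ℕ → E) (s : ℕ → ℝ) {n m : ℕ} (hnm : n ≤ m) (hs : ∀ i < n, 0 ≤ s i ∧ s i ≤ t) :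
    ‖(NormedSpace.exp (t • c) x₀ + ∑ i ∈ range n, NormedSpace.exp ((t - s i) • c) (x i))
        - (NormedSpace.exp (t • cn) x₀ + ∑ i ∈ range n, NormedSpace.exp ((t - s i) • cn) (x i))‖
      ≤ T * Real.exp (T * max ‖c‖ ‖cn‖) * ‖c - cn‖ * (‖x₀‖ + ∑ i ∈ range m, ‖x i‖) := by
  set K := T * Real.exp (T * max ‖c‖ ‖cn‖) * ‖c - cn‖
  have hK : 0 ≤ K := by have := ht.trans htT; positivity
  have hjump : ∀ i ∈ range n, ‖NormedSpace.exp ((t - s i) • c) (x i)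
      - NormedSpace.exp ((t - s i) • cn) (x i)‖ ≤ K * ‖x i‖ := fun i hi => by
    obtain ⟨hs0, hst⟩ := hs i (mem_range.1 hi)
    exact norm_exp_smul_apply_sub_exp_smul_apply_le c cn (by linarith) (by linarith) _
  calc _ = ‖(NormedSpace.exp (t • c) x₀ - NormedSpace.exp (t • cn) x₀) + ∑ i ∈ range n,
          (NormedSpace.exp ((t - s i) • c) (x i) - NormedSpace.exp ((t - s i) • cn) (x i))‖ := by
        rw [sum_sub_distrib]; abel_nf
    _ ≤ K * ‖x₀‖ + ∑ i ∈ range n, K * ‖x i‖ :=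
        (norm_add_le _ _).trans (add_le_add
          (norm_exp_smul_apply_sub_exp_smul_apply_le c cn ht htT x₀)
          ((norm_sum_le _ _).trans (sum_le_sum hjump)))
    _ ≤ K * ‖x₀‖ + ∑ i ∈ range m, K * ‖x i‖ := by gcongr
    _ = K * (‖x₀‖ + ∑ i ∈ range m, ‖x i‖) := by rw [mul_add, mul_sum]

theorem IsLowerSet.mem_of_lt_ncard {s : Set ℕ} (hs : IsLowerSet s) {i : ℕ} (hi : i < s.ncard) :
    i ∈ s := by
  obtain rfl | ⟨a, rfl⟩ := hs.eq_univ_or_Iio <;> simp_all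

theorem IsLowerSet.ncard_eq_succ_iff {s : Set ℕ} (hs : IsLowerSet s) (k : ℕ) :
    s.ncard = k + 1 ↔ k ∈ s ∧ k + 1 ∉ s := by
  obtain rfl | ⟨a, rfl⟩ := hs.eq_univ_or_Iio
  · simp
  · simp only [Set.ncard_Iio_nat, Set.mem_Iio]; omega

theorem Monotone.isLowerSet_setOf_le {α β : Type*} [Preorder α] [Preorder β] {f : α → β}
    (hf : Monotone f) (b : β) : IsLowerSet {a | f a ≤ b} :=
  (isLowerSet_Iic b).preimage hf

theorem iSup_sq_norm_jump_sum_sub_jump_sum_le {E : Type*} [NormedAddCommGroup E]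
    [NormedSpace ℝ E] [CompleteSpace E] (c cn : E →L[ℝ] E) {T : ℝ} {τ : ℕ → ℝ}
    (hτ0 : ∀ i, 0 ≤ τ i) (hτ : Monotone τ) (hfin : {i | τ i ≤ T}.Finite) (x₀ : E) (x : ℕ → E) :
    (⨆ t : Set.Icc (0:ℝ) T,
      ‖(NormedSpace.exp (t.1 • c) x₀
          + ∑ i ∈ range {i | τ i ≤ t.1}.ncard, NormedSpace.exp ((t.1 - τ i) • c) (x i))
        - (NormedSpace.exp (t.1 • cn) x₀
          + ∑ i ∈ range {i | τ i ≤ t.1}.ncard, NormedSpace.exp ((t.1 - τ i) • cn) (x i))‖ ^ 2)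
      ≤ 2 * (T * Real.exp (T * max ‖c‖ ‖cn‖) * ‖c - cn‖) ^ 2
          * (‖x₀‖ ^ 2 + (∑ i ∈ range {i | τ i ≤ T}.ncard, ‖x i‖) ^ 2) := by
  refine Real.iSup_le (fun ⟨t, ht0, htT⟩ => ?_) (by positivity)
  have h := norm_jump_sum_sub_jump_sum_le c cn ht0 htT x₀ x τ (n := {i | τ i ≤ t}.ncard)
    (m := {i | τ i ≤ T}.ncard) (Set.ncard_le_ncard (fun i hi => le_trans hi htT) hfin)
    fun i hi => ⟨hτ0 i, (hτ.isLowerSet_setOf_le t).mem_of_lt_ncard hi⟩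
  refine (pow_le_pow_left₀ (norm_nonneg _) h 2).trans ?_
  rw [mul_pow]
  exact (mul_le_mul_of_nonneg_left add_sq_le (sq_nonneg _)).trans_eq (by ring)

theorem measurable_ncard_setOf_le {Ω : Type*} [MeasurableSpace Ω] {τ : ℕ → Ω → ℝ}
    (hmono : ∀ ω, Monotone fun i => τ i ω) (hmeas : ∀ i, Measurable (τ i)) (t : ℝ) :
    Measurable fun ω => {i | τ i ω ≤ t}.ncard := by
  have hsucc : ∀ k, MeasurableSet {ω | {i | τ i ω ≤ t}.ncard = k + 1} := fun k => by
    simp_rw [((hmono _).isLowerSet_setOf_le t).ncard_eq_succ_iff, Set.mem_ofPred_eq, not_le]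
    exact (measurableSet_le (hmeas k) measurable_const).inter
      (measurableSet_lt measurable_const (hmeas (k + 1)))
  refine measurable_to_countable' fun k => ?_
  cases k with
  | succ k => exact hsucc k
  | zero =>
    have hzero : (fun ω => {i | τ i ω ≤ t}.ncard) ⁻¹' {0}
        = (⋃ k, {ω | {i | τ i ω ≤ t}.ncard = k + 1})ᶜ := by
      ext ω
      suffices ∀ n : ℕ, n = 0 ↔ ∀ k, n ≠ k + 1 by simpa using this _
      rintro (_ | n) <;> simp
    rw [hzero]
    exact (MeasurableSet.iUnion hsucc).compl

theorem hasSum_pow_div_factorial_mul_descFactorial (θ : ℝ) (j : ℕ) :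
    HasSum (fun k : ℕ => θ ^ k / k ! * k.descFactorial j) (θ ^ j * Real.exp θ) := by
  rw [← hasSum_nat_add_iff' j]
  have hlow : ∑ k ∈ range j, θ ^ k / k ! * (k.descFactorial j : ℝ) = 0 :=
    sum_eq_zero fun k hk => by simp [Nat.descFactorial_eq_zero_iff_lt.2 (mem_range.1 hk)]
  have hshift : ∀ n : ℕ, θ ^ (n + j) / (n + j)! * ((n + j).descFactorial j : ℝ)
      = θ ^ j * (θ ^ n / n !) := fun n => by
    have h := Nat.factorial_mul_descFactorial (Nat.le_add_left j n)
    rw [Nat.add_sub_cancel] at h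
    rw [← h]; push_cast; field_simp; ring
  rw [hlow, sub_zero, funext hshift, Real.exp_eq_exp_ℝ]
  exact (NormedSpace.expSeries_div_hasSum_exp θ).mul_left _

theorem hasSum_poisson_mul_descFactorial (θ : ℝ) (j : ℕ) :
    HasSum (fun k : ℕ => Real.exp (-θ) * θ ^ k / k ! * k.descFactorial j) (θ ^ j) := by
  have h := (hasSum_pow_div_factorial_mul_descFactorial θ j).mul_left (Real.exp (-θ))
  rw [mul_left_comm, ← Real.exp_add, neg_add_cancel, Real.exp_zero, mul_one] at h
  simpa only [mul_div_assoc, mul_assoc] using h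

theorem lintegral_comp_eq_tsum_of_indep {Ω : Type*} {m mΩ : MeasurableSpace Ω} {μ : Measure Ω}
    (hm : m ≤ mΩ) {N : Ω → ℕ} (hN : Measurable N)
    (hind : Indep (MeasurableSpace.comap N inferInstance) m μ)
    {F : ℕ → Ω → ℝ≥0∞} (hF : ∀ k, Measurable[m] (F k)) :
    ∫⁻ ω, F (N ω) ω ∂μ = ∑' k, μ {ω | N ω = k} * ∫⁻ ω, F k ω ∂μ := by
  have hset : ∀ k, MeasurableSet[MeasurableSpace.comap N inferInstance] {ω | N ω = k} :=
    fun k => ⟨{k}, measurableSet_singleton k, rfl⟩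
  have hindicator : ∀ k, Measurable[MeasurableSpace.comap N inferInstance]
      ({ω | N ω = k}.indicator 1 : Ω → ℝ≥0∞) := fun k =>
    Measurable.indicator (m := MeasurableSpace.comap N inferInstance) measurable_const (hset k)
  have hpt : ∀ ω, F (N ω) ω = ∑' k, {ω | N ω = k}.indicator 1 ω * F k ω := fun ω => by
    rw [tsum_eq_single (N ω) fun k hk => by simp [Ne.symm hk]]
    simp
  simp_rw [hpt]
  rw [lintegral_tsum (f := fun k ω => {ω | N ω = k}.indicator 1 ω * F k ω) fun k =>
    ((hindicator k).mono hN.comap_le le_rfl).mul ((hF k).mono hm le_rfl) |>.aemeasurable]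
  congr 1 with k
  rw [lintegral_mul_eq_lintegral_mul_lintegral_of_independent_measurableSpace hN.comap_le hm hind
    (hindicator k) (hF k),
    lintegral_indicator_one (s := {ω | N ω = k}) (hN (measurableSet_singleton k))]

section Probability

variable {Ω : Type*} {mΩ : MeasurableSpace Ω} {μ : Measure Ω}

theorem integral_sq_sum_range_of_iIndepFun [IsProbabilityMeasure μ] {Y : ℕ → Ω → ℝ}
    (hY : ∀ i, MemLp (Y i) 2 μ) (hindep : iIndepFun Y μ)
    (hident : ∀ i, IdentDistrib (Y i) (Y 0) μ μ) (k : ℕ) :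
    ∫ ω, (∑ i ∈ range k, Y i ω) ^ 2 ∂μ
      = k * ∫ ω, Y 0 ω ^ 2 ∂μ + k * (k - 1) * (∫ ω, Y 0 ω ∂μ) ^ 2 := by
  have hsum : MemLp (∑ i ∈ range k, Y i) 2 μ := memLp_finsetSum' _ fun i _ => hY i
  have hvar : variance (∑ i ∈ range k, Y i) μ = k * variance (Y 0) μ := by
    rw [IndepFun.variance_sum (fun i _ => hY i) (fun i _ j _ hij => hindep.indepFun hij)]
    simp [fun i => (hident i).variance_eq]
  have hmean : ∫ ω, (∑ i ∈ range k, Y i) ω ∂μ = k * ∫ ω, Y 0 ω ∂μ := by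
    simp [Finset.sum_apply, integral_finsetSum _ fun i _ => (hY i).integrable one_le_two,
      fun i => (hident i).integral_eq]
  rw [variance_eq_sub hsum, variance_eq_sub (hY 0), hmean] at hvar
  simp only [Pi.pow_apply, Finset.sum_apply] at hvar
  linear_combination hvar

theorem integrable_and_integral_eq_of_lintegral_ofReal_eq {f : Ω → ℝ} {a : ℝ}
    (hf : AEStronglyMeasurable f μ) (hf0 : 0 ≤ᵐ[μ] f) (ha : 0 ≤ a)
    (h : ∫⁻ ω, ENNReal.ofReal (f ω) ∂μ = ENNReal.ofReal a) :
    Integrable f μ ∧ ∫ ω, f ω ∂μ = a :=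
  ⟨⟨hf, (hasFiniteIntegral_iff_ofReal hf0).2 (h ▸ ENNReal.ofReal_lt_top)⟩, by
    rw [integral_eq_lintegral_of_nonneg_ae hf0 hf, h, ENNReal.toReal_ofReal ha]⟩

theorem integrable_and_integral_sq_sum_range_poisson [IsProbabilityMeasure μ] {Y : ℕ → Ω → ℝ}
    (hYmeas : ∀ i, Measurable (Y i)) (hY0 : MemLp (Y 0) 2 μ) (hindep : iIndepFun Y μ)
    (hident : ∀ i, IdentDistrib (Y i) (Y 0) μ μ) {N : Ω → ℕ} (hN : Measurable N) {θ : ℝ}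
    (hθ : 0 ≤ θ)
    (hpois : ∀ k : ℕ, μ {ω | N ω = k} = ENNReal.ofReal (Real.exp (-θ) * θ ^ k / k !))
    (hNY : Indep (MeasurableSpace.comap N inferInstance)
      (⨆ i, MeasurableSpace.comap (Y i) inferInstance) μ) :
    Integrable (fun ω => (∑ i ∈ range (N ω), Y i ω) ^ 2) μ ∧
      ∫ ω, (∑ i ∈ range (N ω), Y i ω) ^ 2 ∂μ
        = θ * ∫ ω, Y 0 ω ^ 2 ∂μ + θ ^ 2 * (∫ ω, Y 0 ω ∂μ) ^ 2 := by
  have hm : (⨆ i, MeasurableSpace.comap (Y i) inferInstance) ≤ mΩ :=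
    iSup_le fun i => (hYmeas i).comap_le
  have hYm : ∀ i, Measurable[⨆ i, MeasurableSpace.comap (Y i) inferInstance] (Y i) := fun i =>
    (comap_measurable (Y i)).mono (le_iSup (fun i => MeasurableSpace.comap (Y i) inferInstance) i)
      le_rfl
  have hY : ∀ i, MemLp (Y i) 2 μ := fun i => (hident i).symm.memLp_snd hY0
  have hsq_int : ∀ k, Integrable (fun ω => (∑ i ∈ range k, Y i ω) ^ 2) μ := fun k => by
    simpa using (memLp_finsetSum' (range k) fun i _ => hY i).integrable_sq
  have hS : Measurable fun ω => ∑ i ∈ range (N ω), Y i ω :=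
    (measurable_from_prod_countable_left fun k => Finset.measurable_sum (range k)
      fun i _ => hYmeas i : Measurable fun p : Ω × ℕ => ∑ i ∈ range p.2, Y i p.1).comp
      (measurable_id.prodMk hN)
  have hterm : ∀ k : ℕ, μ {ω | N ω = k} * ∫⁻ ω, ENNReal.ofReal ((∑ i ∈ range k, Y i ω) ^ 2) ∂μ
      = ENNReal.ofReal (Real.exp (-θ) * θ ^ k / k ! * k.descFactorial 1 * ∫ ω, Y 0 ω ^ 2 ∂μ
        + Real.exp (-θ) * θ ^ k / k ! * k.descFactorial 2 * (∫ ω, Y 0 ω ∂μ) ^ 2) := fun k => by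
    rw [hpois, ← ofReal_integral_eq_lintegral_ofReal (hsq_int k)
      (ae_of_all _ fun _ => sq_nonneg _), integral_sq_sum_range_of_iIndepFun hY hindep hident,
      ← ENNReal.ofReal_mul (by positivity), Nat.descFactorial_one, Nat.cast_descFactorial_two]
    ring_nf
  have hsum := ((hasSum_poisson_mul_descFactorial θ 1).mul_right (∫ ω, Y 0 ω ^ 2 ∂μ)).add
    ((hasSum_poisson_mul_descFactorial θ 2).mul_right ((∫ ω, Y 0 ω ∂μ) ^ 2))
  rw [pow_one] at hsum
  refine integrable_and_integral_eq_of_lintegral_ofReal_eq (hS.pow_const 2).aestronglyMeasurable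
    (ae_of_all _ fun _ => sq_nonneg _) (by positivity) ?_
  rw [lintegral_comp_eq_tsum_of_indep hm hN hNY
      (F := fun k ω => ENNReal.ofReal ((∑ i ∈ range k, Y i ω) ^ 2))
      fun k => ((Finset.measurable_sum _ fun i _ => hYm i).pow_const 2).ennreal_ofReal,
    tsum_congr hterm, ← ENNReal.ofReal_tsum_of_nonneg (fun k => by positivity) hsum.summable,
    hsum.tsum_eq]

end Probability

theorem stmt13_general {E : Type*} [NormedAddCommGroup E] [InnerProductSpace ℝ E] [CompleteSpace E]
    [MeasurableSpace E] [BorelSpace E]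
    {Ω : Type*} [MeasurableSpace Ω] (μ : Measure Ω) [IsProbabilityMeasure μ]
    (c cn : E →L[ℝ] E) (lam T : ℝ) (hlam : 0 < lam) (hT : 0 < T)
    (τ : ℕ → Ω → ℝ) (hτpos : ∀ i ω, 0 < τ i ω)
    (hτmono : ∀ ω, StrictMono fun i => τ i ω) (hτmeas : ∀ i, Measurable (τ i))
    (hfin : ∀ t : ℝ, ∀ᵐ ω ∂μ, {i : ℕ | τ i ω ≤ t}.Finite)
    (Nf : ℝ → Ω → ℕ) (hNf : ∀ t ω, Nf t ω = Set.ncard {i : ℕ | τ i ω ≤ t})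
    (hpois : ∀ k : ℕ, μ {ω | Nf T ω = k}
        = ENNReal.ofReal (Real.exp (-(lam * T)) * (lam * T) ^ k / k.factorial))
    (X : ℕ → Ω → E) (hXmeas : ∀ i, Measurable (X i))
    (hident : ∀ i, IdentDistrib (X i) (X 0) μ μ)
    (hindep : iIndepFun X μ)
    (hNindep : Indep (MeasurableSpace.comap (Nf T) inferInstance)
      (⨆ i, MeasurableSpace.comap (X i) inferInstance) μ)
    (hX2 : Integrable (fun ω => ‖X 0 ω‖ ^ 2) μ)
    (V₀ : Ω → E) (hV₀ : Integrable (fun ω => ‖V₀ ω‖ ^ 2) μ)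
    (V Vn : ℝ → Ω → E)
    (hV : ∀ t ω, V t ω = (NormedSpace.exp (t • c)) (V₀ ω)
        + ∑ i ∈ Finset.range (Nf t ω), (NormedSpace.exp ((t - τ i ω) • c)) (X i ω))
    (hVn : ∀ t ω, Vn t ω = (NormedSpace.exp (t • cn)) (V₀ ω)
        + ∑ i ∈ Finset.range (Nf t ω), (NormedSpace.exp ((t - τ i ω) • cn)) (X i ω)) :
    (∫ ω, (⨆ t : Set.Icc (0:ℝ) T, ‖V t.1 ω - Vn t.1 ω‖ ^ 2) ∂μ)
      ≤ (2 * T ^ 2 * Real.exp (2 * T * max ‖c‖ ‖cn‖) *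
          ((∫ ω, ‖V₀ ω‖ ^ 2 ∂μ) + lam * T * (∫ ω, ‖X 0 ω‖ ^ 2 ∂μ)
            + lam ^ 2 * T ^ 2 * (∫ ω, ‖X 0 ω‖ ∂μ) ^ 2))
        * ‖c - cn‖ ^ 2 := by
  set K := T * Real.exp (T * max ‖c‖ ‖cn‖) * ‖c - cn‖ with hK
  have hNmeas : Measurable (Nf T) := by
    simpa only [← hNf] using measurable_ncard_setOf_le (fun ω => (hτmono ω).monotone) hτmeas T
  have hNindep_norm : Indep (MeasurableSpace.comap (Nf T) inferInstance)
      (⨆ i, MeasurableSpace.comap (fun ω => ‖X i ω‖) inferInstance) μ :=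
    indep_of_indep_of_le_right hNindep (iSup_mono fun i =>
      (measurable_norm.comp (comap_measurable (X i))).comap_le)
  obtain ⟨hS_int, hS_eq⟩ := integrable_and_integral_sq_sum_range_poisson
    (Y := fun i ω => ‖X i ω‖) (fun i => (hXmeas i).norm)
    ((memLp_two_iff_integrable_sq (hXmeas 0).norm.aestronglyMeasurable).2 hX2)
    (hindep.comp _ fun _ => measurable_norm) (fun i => (hident i).comp measurable_norm) hNmeas
    (by positivity) hpois hNindep_norm
  have hbound : ∀ᵐ ω ∂μ, (⨆ t : Set.Icc (0:ℝ) T, ‖V t.1 ω - Vn t.1 ω‖ ^ 2)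
      ≤ 2 * K ^ 2 * (‖V₀ ω‖ ^ 2 + (∑ i ∈ range (Nf T ω), ‖X i ω‖) ^ 2) := by
    filter_upwards [hfin T] with ω hω
    simp only [hV, hVn, hNf]
    exact iSup_sq_norm_jump_sum_sub_jump_sum_le c cn (fun i => (hτpos i ω).le)
      (hτmono ω).monotone hω (V₀ ω) (X · ω)
  have hexp : Real.exp (2 * T * max ‖c‖ ‖cn‖) = Real.exp (T * max ‖c‖ ‖cn‖) ^ 2 := by
    rw [sq, ← Real.exp_add]; ring_nf
  calc (∫ ω, (⨆ t : Set.Icc (0:ℝ) T, ‖V t.1 ω - Vn t.1 ω‖ ^ 2) ∂μ)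
      ≤ ∫ ω, 2 * K ^ 2 * (‖V₀ ω‖ ^ 2 + (∑ i ∈ range (Nf T ω), ‖X i ω‖) ^ 2) ∂μ :=
        integral_mono_of_nonneg (ae_of_all _ fun ω => Real.iSup_nonneg fun t => sq_nonneg _)
          ((hV₀.add hS_int).const_mul _) hbound
    _ = _ := by
        rw [integral_const_mul, integral_add hV₀ hS_int, hS_eq, hK, hexp]
        ring

/-- For variance processes `V(t) = exp(t𝔠)V₀ + ∑_{τ_i ≤ t} exp((t−τ_i)𝔠) X_i`
and `Vⁿ(t) = exp(t𝔠ⁿ)V₀ + ∑_{τ_i ≤ t} exp((t−τ_i)𝔠ⁿ) X_i` with the same initial value and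
driving compound Poisson process (`N(T)` Poisson with parameter `λT`, i.i.d. square-integrable
jumps independent of `N(T)`),
`E[sup_{0≤t≤T} ‖V(t) − Vⁿ(t)‖²] ≤ C(T) ‖𝔠 − 𝔠ⁿ‖²` with
`C(T) = 2T² e^{2T max(‖𝔠‖,‖𝔠ⁿ‖)} (E‖V₀‖² + λT E‖X₁‖² + λ²T² (E‖X₁‖)²)`. -/
theorem stmt13 {E : Type*} [NormedAddCommGroup E] [InnerProductSpace ℝ E] [CompleteSpace E]
    [SecondCountableTopology E] [MeasurableSpace E] [BorelSpace E]
    {Ω : Type*} [MeasurableSpace Ω] (μ : Measure Ω) [IsProbabilityMeasure μ]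
    (c cn : E →L[ℝ] E) (lam T : ℝ) (hlam : 0 < lam) (hT : 0 < T)
    (τ : ℕ → Ω → ℝ) (hτpos : ∀ i ω, 0 < τ i ω)
    (hτmono : ∀ ω, StrictMono fun i => τ i ω) (hτmeas : ∀ i, Measurable (τ i))
    (hfin : ∀ t : ℝ, ∀ᵐ ω ∂μ, {i : ℕ | τ i ω ≤ t}.Finite)
    (Nf : ℝ → Ω → ℕ) (hNf : ∀ t ω, Nf t ω = Set.ncard {i : ℕ | τ i ω ≤ t})
    (hpois : ∀ k : ℕ, μ {ω | Nf T ω = k}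
        = ENNReal.ofReal (Real.exp (-(lam * T)) * (lam * T) ^ k / k.factorial))
    (X : ℕ → Ω → E) (hXmeas : ∀ i, Measurable (X i))
    (hident : ∀ i, IdentDistrib (X i) (X 0) μ μ)
    (hindep : iIndepFun X μ)
    (hNindep : Indep (MeasurableSpace.comap (Nf T) inferInstance)
      (⨆ i, MeasurableSpace.comap (X i) inferInstance) μ)
    (hX2 : Integrable (fun ω => ‖X 0 ω‖ ^ 2) μ)
    (V₀ : Ω → E) (hV₀ : Integrable (fun ω => ‖V₀ ω‖ ^ 2) μ)
    (V Vn : ℝ → Ω → E)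
    (hV : ∀ t ω, V t ω = (NormedSpace.exp (t • c)) (V₀ ω)
        + ∑ i ∈ Finset.range (Nf t ω), (NormedSpace.exp ((t - τ i ω) • c)) (X i ω))
    (hVn : ∀ t ω, Vn t ω = (NormedSpace.exp (t • cn)) (V₀ ω)
        + ∑ i ∈ Finset.range (Nf t ω), (NormedSpace.exp ((t - τ i ω) • cn)) (X i ω)) :
    (∫ ω, (⨆ t : Set.Icc (0:ℝ) T, ‖V t.1 ω - Vn t.1 ω‖ ^ 2) ∂μ)
      ≤ (2 * T ^ 2 * Real.exp (2 * T * max ‖c‖ ‖cn‖) *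
          ((∫ ω, ‖V₀ ω‖ ^ 2 ∂μ) + lam * T * (∫ ω, ‖X 0 ω‖ ^ 2 ∂μ)
            + lam ^ 2 * T ^ 2 * (∫ ω, ‖X 0 ω‖ ∂μ) ^ 2))
        * ‖c - cn‖ ^ 2 :=
  stmt13_general μ c cn lam T hlam hT τ hτpos hτmono hτmeas hfin Nf hNf hpois X hXmeas hident hindep
    hNindep hX2 V₀ hV₀ V Vn hV hVn
end
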